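/- Let h, g : ℂ² → ℂ² be holomorphic maps with h(0) = g(0) = 0 whose differentials at 0 are diagonal and invertible, say dh₀ = diag(λ, μ) and dg₀ = diag(λ', μ'). Define the shears h^{[c]}(z₁,z₂) = (λz₁ + Az₂², μz₂) and g^{[c]}(z₁,z₂) = (λ'z₁ + A'z₂², μ'z₂), where A = (1/2)·∂²h₁/∂z₂²(0) and A' = (1/2)·∂²g₁/∂z₂²(0). Then the shearing of the composition h∘g equals the composition of the shearings: (h∘g)^{[c]}(z) = h^{[c]}(g^{[c]}(z)) for all z ∈ ℂ². -/

import Mathlib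

/-!
Only the `z₂²`-coefficient of the first component is at stake, so everything happens on the line
`z₁ = 0`. Write `g(0, w) = (a(w), b(w))`; since `dg₀` is diagonal, `a` vanishes to second order
at `0` and `b'(0) = μ'`. Split `h₁(a, b) = h₁(0, b) + a · D(a, b)`, where `D` is the difference
quotient of `h₁` in its first variable. Comparing coefficients of `w²` gives
`(h ∘ g)₁'' = λ a'' + (h₁(0, b))''`, because `D(a(w), b(w)) → D(0, 0) = λ`, and the one-variable
chain rule gives `(h₁(0, b))''(0) = μ'² ∂²h₁/∂z₂²(0)` since `∂h₁/∂z₂(0) = 0`.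

Only complex differentiability of `h` is used, not its smoothness (Osgood's lemma), so instead
of a two-variable second-order chain rule the joint continuity of `D` comes from Schwarz's lemma.
-/

open Complex

noncomputable section

/-- The coefficient `A = (1/2)·∂²h₁/∂z₂²(0)` of `z₂²` in the first component of the Taylor
expansion of `h` at the origin. -/
def shearCoef (h : ℂ × ℂ → ℂ × ℂ) : ℂ :=
  (1 / 2 : ℂ) * iteratedDeriv 2 (fun w : ℂ => (h (0, w)).1) 0

section OneVariable

open Filter Topology

variable {𝕜 E : Type*} [NontriviallyNormedField 𝕜] [NormedAddCommGroup E] [NormedSpace 𝕜 E]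

theorem iteratedDeriv_two_comp {k : 𝕜 → E} {b : 𝕜 → 𝕜} (hk : ContDiff 𝕜 2 k)
    (hb : ContDiff 𝕜 2 b) (x : 𝕜) :
    iteratedDeriv 2 (k ∘ b) x =
      deriv b x ^ 2 • iteratedDeriv 2 k (b x) + iteratedDeriv 2 b x • deriv k (b x) := by
  rw [show (2 : WithTop ℕ∞) = 1 + 1 by norm_num] at hk hb
  obtain ⟨hk1, -, hk2⟩ := contDiff_succ_iff_deriv.1 hk
  obtain ⟨hb1, -, hb2⟩ := contDiff_succ_iff_deriv.1 hb
  have hderiv : deriv (k ∘ b) = fun w => deriv b w • deriv k (b w) :=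
    funext fun w => deriv.scomp w (hk1 _) (hb1 w)
  have hderiv2 := ((hb2.differentiable one_ne_zero x).hasDerivAt).smul
    ((hk2.differentiable one_ne_zero (b x)).hasDerivAt.scomp x (hb1 x).hasDerivAt)
  rw [iteratedDeriv_succ, iteratedDeriv_one, hderiv]
  refine hderiv2.deriv.trans ?_
  simp only [iteratedDeriv_succ, iteratedDeriv_zero, Function.comp_apply, smul_smul, sq]

theorem dslope_sub {f g : 𝕜 → E} {a : 𝕜} (hf : DifferentiableAt 𝕜 f a)
    (hg : DifferentiableAt 𝕜 g a) (b : 𝕜) :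
    dslope (f - g) a b = dslope f a b - dslope g a b := by
  rcases eq_or_ne b a with rfl | hne
  · simp only [dslope_same, deriv_sub hf hg]
  · simp only [dslope_of_ne _ hne, slope_def_module, Pi.sub_apply, sub_sub_sub_comm, smul_sub]

variable [CharZero 𝕜] [CompleteSpace E]

theorem AnalyticAt.exists_eq_sq_smul {f : 𝕜 → E} (hf : AnalyticAt 𝕜 f 0) (h0 : f 0 = 0)
    (h1 : deriv f 0 = 0) :
    ∃ φ : 𝕜 → E, ContinuousAt φ 0 ∧ φ 0 = (2 : 𝕜)⁻¹ • iteratedDeriv 2 f 0 ∧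
      ∀ z, f z = z ^ 2 • φ z := by
  obtain ⟨F, hF, hfF⟩ := hf.exists_eq_sum_add_pow_mul 3
  refine ⟨fun z => (2 : 𝕜)⁻¹ • iteratedDeriv 2 f 0 + z • F z,
    continuousAt_const.add (continuousAt_id.smul hF.continuousAt), by simp, fun z => ?_⟩
  rw [hfF z]
  simp [Finset.sum_range_succ, h0, h1, smul_add, smul_smul, div_eq_mul_inv, pow_succ]

theorem AnalyticAt.iteratedDeriv_two_eq_of_eq_sq_smul {f χ : 𝕜 → E} (hf : AnalyticAt 𝕜 f 0)
    (hχ : ContinuousAt χ 0) (hfχ : ∀ z, f z = z ^ 2 • χ z) :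
    iteratedDeriv 2 f 0 = (2 : 𝕜) • χ 0 := by
  have h0 : f 0 = 0 := by simpa using hfχ 0
  have h1 : HasDerivAt f 0 0 := by
    rw [hasDerivAt_iff_tendsto_slope]
    have : Tendsto (fun z => z • χ z) (𝓝[≠] 0) (𝓝 0) := by
      simpa using ((continuousAt_id.fun_smul hχ).tendsto).mono_left nhdsWithin_le_nhds
    refine this.congr' (eventually_nhdsWithin_of_forall fun z hz => ?_)
    simp only [slope_def_module, hfχ z, h0, sub_zero, smul_smul]
    congr 1
    field_simp [show z ≠ 0 from hz]
  obtain ⟨φ, hφ, hφ0, hfφ⟩ := hf.exists_eq_sq_smul h0 h1.deriv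
  have hχφ : χ 0 = φ 0 := by
    refine tendsto_nhds_unique (hχ.tendsto.mono_left (nhdsWithin_le_nhds (s := {0}ᶜ)))
      ((hφ.tendsto.mono_left nhdsWithin_le_nhds).congr' ?_)
    filter_upwards [self_mem_nhdsWithin] with z hz
    exact smul_right_injective E (pow_ne_zero 2 hz) ((hfφ z).symm.trans (hfχ z))
  rw [hχφ, hφ0, smul_inv_smul₀ two_ne_zero]

theorem AnalyticAt.iteratedDeriv_two_eq_of_eq_smul [CompleteSpace 𝕜] {v : 𝕜 → E} {a : 𝕜 → 𝕜}
    {ψ : 𝕜 → E} (hv : AnalyticAt 𝕜 v 0) (ha : AnalyticAt 𝕜 a 0) (ha0 : a 0 = 0)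
    (ha1 : deriv a 0 = 0) (hψ : ContinuousAt ψ 0) (hvaψ : ∀ z, v z = a z • ψ z) :
    iteratedDeriv 2 v 0 = iteratedDeriv 2 a 0 • ψ 0 := by
  obtain ⟨α, hα, hα0, haα⟩ := ha.exists_eq_sq_smul ha0 ha1
  rw [hv.iteratedDeriv_two_eq_of_eq_sq_smul (hα.fun_smul hψ) fun z => by
    rw [hvaψ, haα, smul_eq_mul, mul_smul], hα0, smul_smul, smul_eq_mul, ← mul_assoc,
    mul_inv_cancel₀ two_ne_zero, one_mul]

end OneVariable

section TwoVariables

open Filter Topology Metric Set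

theorem HasFDerivAt.hasDerivAt_partial_fst {𝕜 E : Type*} [NontriviallyNormedField 𝕜]
    [NormedAddCommGroup E] [NormedSpace 𝕜 E] {f : 𝕜 × 𝕜 → E} {f' : 𝕜 × 𝕜 →L[𝕜] E} {x y : 𝕜}
    (hf : HasFDerivAt f f' (x, y)) : HasDerivAt (fun t => f (t, y)) (f' (1, 0)) x :=
  hf.comp_hasDerivAt x ((hasDerivAt_id x).prodMk (hasDerivAt_const x y))

theorem HasFDerivAt.hasDerivAt_partial_snd {𝕜 E : Type*} [NontriviallyNormedField 𝕜]
    [NormedAddCommGroup E] [NormedSpace 𝕜 E] {f : 𝕜 × 𝕜 → E} {f' : 𝕜 × 𝕜 →L[𝕜] E} {x y : 𝕜}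
    (hf : HasFDerivAt f f' (x, y)) : HasDerivAt (fun t => f (x, t)) (f' (0, 1)) y :=
  hf.comp_hasDerivAt y ((hasDerivAt_const y x).prodMk (hasDerivAt_id y))

variable {X E : Type*} [TopologicalSpace X] [NormedAddCommGroup E] [NormedSpace ℂ E]

theorem continuousAt_dslope_fst {H : ℂ × X → E} (hH : Continuous H)
    (hd : ∀ y, Differentiable ℂ fun x => H (x, y)) (c : ℂ) (y₀ : X) :
    ContinuousAt (fun p : ℂ × X => dslope (fun x => H (x, p.2)) c p.1) (c, y₀) := by
  rw [Metric.continuousAt_iff']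
  intro ε hε
  have hnear : ∀ᶠ x in 𝓝 c,
      dist (dslope (fun x => H (x, y₀)) c x) (dslope (fun x => H (x, y₀)) c c) < ε / 2 :=
    Metric.continuousAt_iff'.1 (continuousAt_dslope_same.2 (hd y₀ c)) _ (half_pos hε)
  obtain ⟨V, hV, hVunif⟩ := (isCompact_closedBall c 1).mem_uniformity_of_prod
    (f := fun y x => H (x, y)) (s := univ)
    (hH.comp continuous_swap).continuousOn (mem_univ y₀)
    (Metric.dist_mem_uniformity (by positivity : 0 < ε / 8))
  rw [nhdsWithin_univ] at hV
  -- Schwarz's lemma turns uniform closeness of `H (·, y)` to `H (·, y₀)` on the unit disc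
  -- into closeness of the difference quotients at `c`.
  have hschwarz : ∀ y ∈ V, ∀ x ∈ ball c 1,
      dist (dslope (fun x => H (x, y)) c x) (dslope (fun x => H (x, y₀)) c x) ≤ ε / 4 := by
    intro y hy x hx
    have hclose : ∀ x ∈ ball c 1, ‖H (x, y) - H (x, y₀)‖ < ε / 8 := fun x hx =>
      dist_eq_norm (H (x, y)) _ ▸ hVunif y hy x (ball_subset_closedBall hx)
    have hmaps : MapsTo ((fun x => H (x, y)) - fun x => H (x, y₀)) (ball c 1)
        (closedBall (((fun x => H (x, y)) - fun x => H (x, y₀)) c) (ε / 4)) := by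
      intro x hx
      rw [mem_closedBall, dist_eq_norm]
      calc _ ≤ ‖H (x, y) - H (x, y₀)‖ + ‖H (c, y) - H (c, y₀)‖ := norm_sub_le _ _
        _ ≤ ε / 4 := by linarith [hclose x hx, hclose c (mem_ball_self one_pos)]
    rw [dist_eq_norm, ← dslope_sub (hd y c) (hd y₀ c)]
    simpa using Complex.norm_dslope_le_div_of_mapsTo_ball
      (((hd y).sub (hd y₀)).differentiableOn) hmaps hx
  filter_upwards [(hnear.and (ball_mem_nhds c one_pos)).prod_nhds hV]
    with ⟨x, y⟩ ⟨⟨hxnear, hxball⟩, hy⟩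
  calc _ ≤ _ + _ := dist_triangle _ (dslope (fun x => H (x, y₀)) c x) _
    _ < ε := by linarith [hschwarz y hy x hxball]

theorem iteratedDeriv_two_comp_prodMk [CompleteSpace E] {H : ℂ × ℂ → E}
    (hH : Differentiable ℂ H) {a b : ℂ → ℂ} (ha : Differentiable ℂ a) (hb : Differentiable ℂ b) (ha0 : a 0 = 0) (ha1 : deriv a 0 = 0) :
    iteratedDeriv 2 (fun w => H (a w, b w)) 0 =
      iteratedDeriv 2 a 0 • deriv (fun x => H (x, b 0)) 0 +
        iteratedDeriv 2 (fun w => H (0, b w)) 0 := by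
  have hu : Differentiable ℂ fun w => H (a w, b w) := hH.comp (ha.prodMk hb)
  have hk : Differentiable ℂ fun w => H (0, b w) := hH.comp ((differentiable_const 0).prodMk hb)
  have hsplit : ∀ w, H (a w, b w) - H (0, b w) = a w • dslope (fun x => H (x, b w)) 0 (a w) :=
    fun w => by simpa using (sub_smul_dslope (fun x => H (x, b w)) 0 (a w)).symm
  have hψ : ContinuousAt (fun w => dslope (fun x => H (x, b w)) 0 (a w)) 0 :=
    ContinuousAt.comp_of_eq (continuousAt_dslope_fst hH.continuous
      (fun y => hH.comp (differentiable_id.prodMk (differentiable_const y))) 0 (b 0))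
      (ha.continuous.continuousAt.prodMk hb.continuous.continuousAt) (by rw [ha0])
  have := ((hu.sub hk).analyticAt 0).iteratedDeriv_two_eq_of_eq_smul (ha.analyticAt 0) ha0 ha1
    hψ hsplit
  rw [iteratedDeriv_sub hu.contDiff.contDiffAt hk.contDiff.contDiffAt, ha0, dslope_same]
    at this
  rw [← this, sub_add_cancel]

end TwoVariables

theorem shearCoef_comp {h g : ℂ × ℂ → ℂ × ℂ} (hh : Differentiable ℂ h) (hg : Differentiable ℂ g)
    (g0 : g 0 = 0) {lam mu lam' mu' : ℂ}
    (hdh : ∀ z : ℂ × ℂ, fderiv ℂ h 0 z = (lam * z.1, mu * z.2))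
    (hdg : ∀ z : ℂ × ℂ, fderiv ℂ g 0 z = (lam' * z.1, mu' * z.2)) :
    shearCoef (h ∘ g) = lam * shearCoef g + mu' ^ 2 * shearCoef h := by
  have hH : Differentiable ℂ fun p => (h p).1 := hh.fst
  have hline : Differentiable ℂ fun w : ℂ => g (0, w) :=
    hg.comp ((differentiable_const 0).prodMk differentiable_id)
  have hH' : HasFDerivAt (fun p => (h p).1) _ ((0 : ℂ), (0 : ℂ)) := (hh 0).hasFDerivAt.fst
  have hg' : HasFDerivAt g _ ((0 : ℂ), (0 : ℂ)) := (hg 0).hasFDerivAt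
  have hg00 : g (0, 0) = 0 := g0
  have ha1 : deriv (fun w => (g (0, w)).1) 0 = 0 := by
    simpa [hdg] using hg'.fst.hasDerivAt_partial_snd.deriv
  have hb1 : deriv (fun w => (g (0, w)).2) 0 = mu' := by
    simpa [hdg] using hg'.snd.hasDerivAt_partial_snd.deriv
  have hk1 : deriv (fun w => (h (0, w)).1) 0 = 0 := by
    simpa [hdh] using hH'.hasDerivAt_partial_snd.deriv
  have hlam : deriv (fun x => (h (x, 0)).1) 0 = lam := by
    simpa [hdh] using hH'.hasDerivAt_partial_fst.deriv
  have hkb := iteratedDeriv_two_comp (hH.comp ((differentiable_const 0).prodMk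
    differentiable_id)).contDiff hline.snd.contDiff 0
  simp only [Function.comp_def, id_eq, hg00, Prod.snd_zero, hb1, hk1] at hkb
  have key := iteratedDeriv_two_comp_prodMk hH hline.fst hline.snd (by simp [hg00]) ha1
  simp only [hg00, Prod.snd_zero, hlam] at key
  simp only [shearCoef, Function.comp_apply, key, hkb, smul_eq_mul]
  ring

theorem shearing_comp_general (h g : ℂ × ℂ → ℂ × ℂ)
    (hh : Differentiable ℂ h) (hg : Differentiable ℂ g)
    (g0 : g 0 = 0)
    (lam mu lam' mu' : ℂ)
    (hdh : ∀ z : ℂ × ℂ, fderiv ℂ h 0 z = (lam * z.1, mu * z.2))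
    (hdg : ∀ z : ℂ × ℂ, fderiv ℂ g 0 z = (lam' * z.1, mu' * z.2)) :
    ∀ z : ℂ × ℂ,
      ((lam * lam' * z.1 + shearCoef (h ∘ g) * z.2 ^ 2, mu * mu' * z.2) : ℂ × ℂ) =
        (lam * (lam' * z.1 + shearCoef g * z.2 ^ 2) + shearCoef h * (mu' * z.2) ^ 2,
          mu * (mu' * z.2)) := by
  intro z
  rw [shearCoef_comp hh hg g0 hdh hdg]
  ext <;> ring

/-- Shearing is compatible with composition: `(h ∘ g)^{[c]} = h^{[c]} ∘ g^{[c]}` on all of `ℂ²`. -/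
theorem shearing_comp (h g : ℂ × ℂ → ℂ × ℂ)
    (hh : Differentiable ℂ h) (hg : Differentiable ℂ g)
    (h0 : h 0 = 0) (g0 : g 0 = 0)
    (lam mu lam' mu' : ℂ)
    (hlam : lam ≠ 0) (hmu : mu ≠ 0) (hlam' : lam' ≠ 0) (hmu' : mu' ≠ 0)
    (hdh : ∀ z : ℂ × ℂ, fderiv ℂ h 0 z = (lam * z.1, mu * z.2))
    (hdg : ∀ z : ℂ × ℂ, fderiv ℂ g 0 z = (lam' * z.1, mu' * z.2)) :
    ∀ z : ℂ × ℂ,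
      ((lam * lam' * z.1 + shearCoef (h ∘ g) * z.2 ^ 2, mu * mu' * z.2) : ℂ × ℂ) =
        (lam * (lam' * z.1 + shearCoef g * z.2 ^ 2) + shearCoef h * (mu' * z.2) ^ 2,
          mu * (mu' * z.2)) :=
  shearing_comp_general h g hh hg g0 lam mu lam' mu' hdh hdg
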